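/- (i) For all compactly supported f, g ∈ C₀(T), the set {s ∈ G : rt_s(g)·f ≠ 0} is contained in a compact subset of G. (ii) Consequently, for all a, b ∈ A₀, the functions s ↦ α_s(a)·b and s ↦ b·α_s(a) from G to A are norm-continuous and vanish outside a compact subset of G; in particular they are Bochner integrable with respect to any left Haar measure on G. -/

import Mathlib

/-!
Properness of the action makes `{(t, s) | t ∈ supp f, t·s ∈ supp g}` compact, and every `s` with
`rt_s(g)·f ≠ 0` lies in its projection to `G`. For generators `x = φ(f)aφ(g)`, `y = φ(f')bφ(g')`
of `A₀`, equivariance on either side gives `α_s(x)·y = α_s(φ(f)a)·φ(rt_s(g)·f')·bφ(g')` and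
`y·α_s(x) = φ(f')b·φ(g'·rt_s(f))·α_s(aφ(g))`, which vanish off such a compact set; both
expressions are bilinear in `(x, y)`, so this extends to all of `A₀`. Continuity comes from
strong continuity of `α`, and a continuous compactly supported function is Haar integrable.
-/

open MeasureTheory ZeroAtInfty MultiplierAlgebra

noncomputable section

variable (G T A : Type*) [Group G] [TopologicalSpace G] [IsTopologicalGroup G]
  [LocallyCompactSpace G] [T2Space G]
  [TopologicalSpace T] [LocallyCompactSpace T] [T2Space T]
  [NonUnitalCStarAlgebra A]

/-- The data of a free and proper right action of `G` on `T`, a strongly continuous action `α`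
of `G` on the C*-algebra `A`, and an `rt`–`α` equivariant nondegenerate *-homomorphism
`φ : C₀(T) → M(A)`. -/
structure FreeProperSetup : Type _ where
  /-- the right action of `G` on `T` -/
  ρ : T → G → T
  ρ_continuous : Continuous fun p : T × G => ρ p.1 p.2
  ρ_one : ∀ t, ρ t 1 = t
  ρ_mul : ∀ t s s', ρ (ρ t s) s' = ρ t (s * s')
  ρ_free : ∀ t s, ρ t s = t → s = 1
  ρ_proper : IsProperMap fun p : T × G => (p.1, ρ p.1 p.2)
  /-- the induced action on `C₀(T)` -/
  rt : G → C₀(T, ℂ) → C₀(T, ℂ)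
  rt_apply : ∀ (s : G) (f : C₀(T, ℂ)) (t : T), rt s f t = f (ρ t s)
  /-- the action of `G` on `A` by *-automorphisms -/
  α : G → A ≃⋆ₐ[ℂ] A
  α_mul : ∀ (s s' : G) (a : A), α (s * s') a = α s (α s' a)
  α_continuous : ∀ a : A, Continuous fun s => α s a
  /-- the nondegenerate equivariant *-homomorphism `φ : C₀(T) → M(A)` -/
  φ : C₀(T, ℂ) →⋆ₙₐ[ℂ] 𝓜(ℂ, A)
  φ_nondegenerate :
    Dense (Submodule.span ℂ {x : A | ∃ (f : C₀(T, ℂ)) (a : A), (x : 𝓜(ℂ, A)) = φ f * a} : Set A)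
  φ_equivariant : ∀ (s : G) (f : C₀(T, ℂ)) (a x : A),
    (x : 𝓜(ℂ, A)) = φ f * a →
      ((α s x : A) : 𝓜(ℂ, A)) = φ (rt s f) * ((α s a : A) : 𝓜(ℂ, A))

variable {G T A}

/-- `A₀` is the linear span of `φ(f)·a·φ(g)` for `a ∈ A` and compactly supported
`f, g ∈ C₀(T)`, regarded as a subset of `A`. -/
def FreeProperSetup.A₀ (S : FreeProperSetup G T A) : Set A :=
  {x : A | (x : 𝓜(ℂ, A)) ∈ Submodule.span ℂ
    {y : 𝓜(ℂ, A) | ∃ f g : C₀(T, ℂ), HasCompactSupport ⇑f ∧ HasCompactSupport ⇑g ∧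
      ∃ a : A, y = S.φ f * (a : 𝓜(ℂ, A)) * S.φ g}}


namespace CStarRing

variable {E : Type*} [NonUnitalNormedRing E] [StarRing E] [CStarRing E]

theorem eq_of_forall_mul_left_eq {a b : E} (h : ∀ x : E, x * a = x * b) : a = b := by
  rw [← sub_eq_zero, ← star_mul_self_eq_zero_iff, mul_sub, h, sub_self]

theorem eq_of_forall_mul_right_eq {a b : E} (h : ∀ x : E, a * x = b * x) : a = b := by
  rw [← sub_eq_zero, ← mul_star_self_eq_zero_iff, sub_mul, h, sub_self]

end CStarRing

namespace DoubleCentralizer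

theorem ext_fst {m n : 𝓜(ℂ, A)} (h : m.fst = n.fst) : m = n := by
  refine ext ℂ A m n (Prod.ext h (ContinuousLinearMap.ext fun x => ?_))
  exact CStarRing.eq_of_forall_mul_right_eq fun y => by rw [m.central, n.central, h]

theorem ext_snd {m n : 𝓜(ℂ, A)} (h : m.snd = n.snd) : m = n := by
  refine ext ℂ A m n (Prod.ext (ContinuousLinearMap.ext fun y => ?_) h)
  exact CStarRing.eq_of_forall_mul_left_eq fun x => by rw [← m.central, ← n.central, h]

theorem coe_injective : Function.Injective (DoubleCentralizer.coe ℂ : A → 𝓜(ℂ, A)) :=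
  fun _ _ h => CStarRing.eq_of_forall_mul_right_eq fun x =>
    congrArg (fun m : 𝓜(ℂ, A) => m.fst x) h

theorem mul_coe (m : 𝓜(ℂ, A)) (a : A) : m * (a : 𝓜(ℂ, A)) = ((m.fst a : A) : 𝓜(ℂ, A)) :=
  ext_snd <| ContinuousLinearMap.ext fun x => m.central x a

theorem coe_mul (a : A) (m : 𝓜(ℂ, A)) : (a : 𝓜(ℂ, A)) * m = ((m.snd a : A) : 𝓜(ℂ, A)) :=
  ext_fst <| ContinuousLinearMap.ext fun x => (m.central a x).symm

theorem coe_star (a : A) : ((star a : A) : 𝓜(ℂ, A)) = star (a : 𝓜(ℂ, A)) :=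
  map_star coeHom a

end DoubleCentralizer

def Submodule.compactlySupported (R X P : Type*) [Semiring R] [TopologicalSpace X]
    [AddCommMonoid P] [Module R P] : Submodule R (X → P) where
  carrier := {F | HasCompactSupport F}
  add_mem' := HasCompactSupport.add
  zero_mem' := HasCompactSupport.zero
  smul_mem' c _ hF := hF.smul_left (f := fun _ => c)

theorem LinearMap.hasCompactSupport_of_mem_span₂ {R M N X P : Type*} [CommSemiring R]
    [AddCommMonoid M] [AddCommMonoid N] [AddCommMonoid P] [Module R M] [Module R N] [Module R P]
    [TopologicalSpace X] (B : M →ₗ[R] N →ₗ[R] X → P) {s : Set M} {t : Set N}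
    (h : ∀ m ∈ s, ∀ n ∈ t, HasCompactSupport (B m n)) {m : M} {n : N}
    (hm : m ∈ Submodule.span R s) (hn : n ∈ Submodule.span R t) : HasCompactSupport (B m n) := by
  have hle : Submodule.map₂ B (Submodule.span R s) (Submodule.span R t) ≤
      Submodule.compactlySupported R X P := by
    rw [Submodule.map₂_span_span, Submodule.span_le]
    rintro _ ⟨m, hm, n, hn, rfl⟩
    exact h m hm n hn
  exact hle (Submodule.apply_mem_map₂ B hm hn)

namespace FreeProperSetup

open DoubleCentralizer

omit [IsTopologicalGroup G] [LocallyCompactSpace G] [T2Space G] [LocallyCompactSpace T] [T2Space T]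

variable (S : FreeProperSetup G T A)

theorem exists_isCompact_superset_rt_mul_ne_zero {f g : C₀(T, ℂ)} (hf : HasCompactSupport ⇑f)
    (hg : HasCompactSupport ⇑g) : ∃ C : Set G, IsCompact C ∧ {s : G | S.rt s g * f ≠ 0} ⊆ C := by
  refine ⟨Prod.snd '' ((fun p : T × G => (p.1, S.ρ p.1 p.2)) ⁻¹' (tsupport f ×ˢ tsupport g)),
    (S.ρ_proper.isCompact_preimage (hf.prod hg)).image continuous_snd, fun s hs => ?_⟩
  obtain ⟨t, ht⟩ : ∃ t, S.rt s g t * f t ≠ 0 := by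
    by_contra! h
    exact hs (ZeroAtInftyContinuousMap.ext h)
  rw [S.rt_apply] at ht
  exact ⟨(t, s), ⟨subset_tsupport _ (right_ne_zero_of_mul ht),
    subset_tsupport _ (left_ne_zero_of_mul ht)⟩, rfl⟩

theorem rt_star (s : G) (g : C₀(T, ℂ)) : S.rt s (star g) = star (S.rt s g) := by
  ext t
  simp [S.rt_apply]

theorem φ_equivariant_right (s : G) (g : C₀(T, ℂ)) (a x : A)
    (hx : (x : 𝓜(ℂ, A)) = a * S.φ g) :
    ((S.α s x : A) : 𝓜(ℂ, A)) = ((S.α s a : A) : 𝓜(ℂ, A)) * S.φ (S.rt s g) := by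
  have hx_star : ((star x : A) : 𝓜(ℂ, A)) = S.φ (star g) * ((star a : A) : 𝓜(ℂ, A)) := by
    rw [coe_star, coe_star, hx, star_mul, map_star]
  have := congrArg star (S.φ_equivariant s _ _ _ hx_star)
  rwa [star_mul, ← map_star, S.rt_star, star_star, ← coe_star, ← coe_star, ← map_star, ← map_star,
    star_star, star_star] at this

def generators : Set A :=
  {x | ∃ f g : C₀(T, ℂ), HasCompactSupport ⇑f ∧ HasCompactSupport ⇑g ∧
    ∃ a : A, (x : 𝓜(ℂ, A)) = S.φ f * a * S.φ g}

-- `A₀` is defined as a pullback of a span in `𝓜(ℂ, A)`; it is the span of the pulled-back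
-- generators because each generator already lies in the ideal `A`.
theorem A₀_eq_span_generators : S.A₀ = Submodule.span ℂ S.generators := by
  refine congrArg SetLike.coe (Submodule.span_preimage_eq
    (f := ((coeHom : A →⋆ₙₐ[ℂ] 𝓜(ℂ, A)) : A →ₗ[ℂ] 𝓜(ℂ, A))) ?_ ?_).symm
  · exact ⟨0, 0, 0, .zero, .zero, 0, by simp⟩
  · rintro _ ⟨f, g, -, -, a, rfl⟩
    exact ⟨(S.φ g).snd ((S.φ f).fst a), by rw [mul_coe, coe_mul]; rfl⟩

theorem hasCompactSupport_α_mul_of_mem_generators [R1Space G] {x y : A} (hx : x ∈ S.generators)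
    (hy : y ∈ S.generators) : HasCompactSupport fun s => S.α s x * y := by
  obtain ⟨f, g, -, hg, a, hx⟩ := hx
  obtain ⟨f', g', hf', -, b, hy⟩ := hy
  obtain ⟨C, hC, hCsub⟩ := S.exists_isCompact_superset_rt_mul_ne_zero hf' hg
  refine HasCompactSupport.intro hC fun s hs => coe_injective ?_
  have hφ : S.φ (S.rt s g) * S.φ f' = 0 := by
    rw [← map_mul, not_not.1 fun h => hs (hCsub h), map_zero]
  have hαx := S.φ_equivariant_right s g ((S.φ f).fst a) x (by rw [hx, mul_coe])
  calc ((S.α s x * y : A) : 𝓜(ℂ, A))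
      = ((S.α s x : A) : 𝓜(ℂ, A)) * y := map_mul coeHom _ _
    _ = ((S.α s ((S.φ f).fst a) : A) : 𝓜(ℂ, A)) * (S.φ (S.rt s g) * S.φ f') * b * S.φ g' := by
      rw [hαx, hy]; simp only [mul_assoc]
    _ = ((0 : A) : 𝓜(ℂ, A)) := by
      rw [hφ, mul_zero, zero_mul, zero_mul]; exact (map_zero coeHom).symm

theorem hasCompactSupport_mul_α_of_mem_generators [R1Space G] {x y : A} (hx : x ∈ S.generators)
    (hy : y ∈ S.generators) : HasCompactSupport fun s => y * S.α s x := by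
  obtain ⟨f, g, hf, -, a, hx⟩ := hx
  obtain ⟨f', g', -, hg', b, hy⟩ := hy
  obtain ⟨C, hC, hCsub⟩ := S.exists_isCompact_superset_rt_mul_ne_zero hg' hf
  refine HasCompactSupport.intro hC fun s hs => coe_injective ?_
  have hφ : S.φ g' * S.φ (S.rt s f) = 0 := by
    rw [← map_mul, mul_comm, not_not.1 fun h => hs (hCsub h), map_zero]
  have hαx := S.φ_equivariant s f ((S.φ g).snd a) x (by rw [hx, mul_assoc, coe_mul])
  calc ((y * S.α s x : A) : 𝓜(ℂ, A))
      = (y : 𝓜(ℂ, A)) * ((S.α s x : A) : 𝓜(ℂ, A)) := map_mul coeHom _ _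
    _ = S.φ f' * b * (S.φ g' * S.φ (S.rt s f)) * ((S.α s ((S.φ g).snd a) : A) : 𝓜(ℂ, A)) := by
      rw [hαx, hy]; simp only [mul_assoc]
    _ = ((0 : A) : 𝓜(ℂ, A)) := by
      rw [hφ, mul_zero, zero_mul]; exact (map_zero coeHom).symm

def orbitMul : A →ₗ[ℂ] A →ₗ[ℂ] G → A :=
  LinearMap.mk₂ ℂ (fun x y s => S.α s x * y)
    (fun _ _ _ => funext fun _ => by simp [add_mul])
    (fun _ _ _ => funext fun _ => by simp [smul_mul_assoc])
    (fun _ _ _ => funext fun _ => by simp [mul_add])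
    (fun _ _ _ => funext fun _ => by simp [mul_smul_comm])

def mulOrbit : A →ₗ[ℂ] A →ₗ[ℂ] G → A :=
  LinearMap.mk₂ ℂ (fun x y s => y * S.α s x)
    (fun _ _ _ => funext fun _ => by simp [mul_add])
    (fun _ _ _ => funext fun _ => by simp [mul_smul_comm])
    (fun _ _ _ => funext fun _ => by simp [add_mul])
    (fun _ _ _ => funext fun _ => by simp [smul_mul_assoc])

theorem hasCompactSupport_α_mul [R1Space G] {x y : A} (hx : x ∈ S.A₀) (hy : y ∈ S.A₀) :
    HasCompactSupport fun s => S.α s x * y := by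
  rw [A₀_eq_span_generators] at hx hy
  exact S.orbitMul.hasCompactSupport_of_mem_span₂
    (fun _ hx _ hy => S.hasCompactSupport_α_mul_of_mem_generators hx hy) hx hy

theorem hasCompactSupport_mul_α [R1Space G] {x y : A} (hx : x ∈ S.A₀) (hy : y ∈ S.A₀) :
    HasCompactSupport fun s => y * S.α s x := by
  rw [A₀_eq_span_generators] at hx hy
  exact S.mulOrbit.hasCompactSupport_of_mem_span₂
    (fun _ hx _ hy => S.hasCompactSupport_mul_α_of_mem_generators hx hy) hx hy

end FreeProperSetup

/-- (i) For compactly supported `f, g ∈ C₀(T)`, the set `{s ∈ G : rt_s(g)·f ≠ 0}` is contained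
in a compact subset of `G`.  (ii) Consequently, for `a, b ∈ A₀` the functions `s ↦ α_s(a)·b`
and `s ↦ b·α_s(a)` are norm-continuous, vanish outside a compact subset of `G`, and are
Bochner integrable with respect to any left Haar measure on `G`. -/
theorem orbit_compactly_supported [MeasurableSpace G] [BorelSpace G]
    (S : FreeProperSetup G T A) :
    (∀ f g : C₀(T, ℂ), HasCompactSupport ⇑f → HasCompactSupport ⇑g →
      ∃ C : Set G, IsCompact C ∧ {s : G | S.rt s g * f ≠ 0} ⊆ C) ∧
    (∀ a ∈ S.A₀, ∀ b ∈ S.A₀,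
      Continuous (fun s : G => S.α s a * b) ∧
      Continuous (fun s : G => b * S.α s a) ∧
      (∃ C : Set G, IsCompact C ∧ ∀ s ∉ C, S.α s a * b = 0 ∧ b * S.α s a = 0) ∧
      (∀ (μ : Measure G) [μ.IsHaarMeasure],
        Integrable (fun s : G => S.α s a * b) μ ∧
        Integrable (fun s : G => b * S.α s a) μ)) := by
  refine ⟨fun f g => S.exists_isCompact_superset_rt_mul_ne_zero, fun a ha b hb => ?_⟩
  have hcont₁ : Continuous fun s => S.α s a * b := (S.α_continuous a).mul continuous_const
  have hcont₂ : Continuous fun s => b * S.α s a := continuous_const.mul (S.α_continuous a)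
  have hsupp₁ := S.hasCompactSupport_α_mul ha hb
  have hsupp₂ := S.hasCompactSupport_mul_α ha hb
  refine ⟨hcont₁, hcont₂, ⟨_, IsCompact.union hsupp₁ hsupp₂, fun s hs => ?_⟩, fun μ _ =>
    ⟨hcont₁.integrable_of_hasCompactSupport hsupp₁, hcont₂.integrable_of_hasCompactSupport hsupp₂⟩⟩
  rw [Set.mem_union, not_or] at hs
  exact ⟨image_eq_zero_of_notMem_tsupport (f := fun s => S.α s a * b) hs.1,
    image_eq_zero_of_notMem_tsupport (f := fun s => b * S.α s a) hs.2⟩
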